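/- arXiv:2105.13287 — 2 statements merged into one kernel-verified Lean document; each statement's English description precedes it below -/
import Mathlib

section
/- Let ε' > 0 and P ∈ [0,1) with P · exp(ε') ≤ exp(-1). Then (1 - P)/(1 - exp(ε')·P) ≤ exp((exp(ε') - 1)·P/(1 - exp(-1))). -/
open Real

theorem one_sub_div_one_sub_mul_le_exp {A P c : ℝ} (hA : 1 ≤ A) (hP : 0 ≤ P) (hc : 0 < c)
    (hcAP : c ≤ 1 - A * P) :
    (1 - P) / (1 - A * P) ≤ exp ((A - 1) * P / c) := by
  have hd : 0 < 1 - A * P := hc.trans_le hcAP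
  have hx : 0 ≤ (A - 1) * P := mul_nonneg (sub_nonneg.2 hA) hP
  calc (1 - P) / (1 - A * P) = 1 + (A - 1) * P / (1 - A * P) := by rw [one_add_div hd.ne']; ring
    _ ≤ 1 + (A - 1) * P / c := by gcongr
    _ ≤ exp ((A - 1) * P / c) := by linarith [add_one_le_exp ((A - 1) * P / c)]

theorem survival_ratio_le_exp_general (ε' P : ℝ) (hε : 0 < ε') (hP0 : 0 ≤ P)
    (h : P * Real.exp ε' ≤ Real.exp (-1)) :
    (1 - P) / (1 - Real.exp ε' * P)
      ≤ Real.exp ((Real.exp ε' - 1) * P / (1 - Real.exp (-1))) := by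
  have he : Real.exp (-1) < 1 := exp_lt_one_iff.2 (by norm_num)
  refine one_sub_div_one_sub_mul_le_exp (one_le_exp hε.le) hP0 (sub_pos.2 he) ?_
  linarith [mul_comm P (Real.exp ε')]

theorem survival_ratio_le_exp (ε' P : ℝ) (hε : 0 < ε') (hP0 : 0 ≤ P) (hP1 : P < 1)
    (h : P * Real.exp ε' ≤ Real.exp (-1)) :
    (1 - P) / (1 - Real.exp ε' * P)
      ≤ Real.exp ((Real.exp ε' - 1) * P / (1 - Real.exp (-1))) :=
  survival_ratio_le_exp_general ε' P hε hP0 h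
end

section
/- Let ε' ∈ (0,1] and P_u, P_v ∈ [0,1) each satisfying P·exp(ε') ≤ exp(-1). Let p = P_u + P_v - P_u·P_v. Then ((1-P_u)/(1-exp(ε')P_u)) · ((1-P_v)/(1-exp(ε')P_v)) ≤ exp(4ε'·p/(1 - exp(-1))). -/
/-!
Write `c = 1 - e⁻¹`. Since `e^ε' P ≤ e⁻¹`, each factor is
`(1 - P) / (1 - e^ε' P) = 1 + (e^ε' - 1) P / (1 - e^ε' P) ≤ 1 + (e^ε' - 1) P / c`,
and `e^ε' - 1 ≤ 2ε'` on `[0, 1]` by convexity, so the factor is at most `exp (2ε' P / c)`.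
Both `P_u` and `P_v` are at most `p = P_u + P_v - P_u P_v`, so the product is at most
`exp (2ε' p / c) ^ 2 = exp (4ε' p / c)`.
-/

open Real

lemma Real.exp_le_one_add_two_mul {x : ℝ} (h0 : 0 ≤ x) (h1 : x ≤ 1) : exp x ≤ 1 + 2 * x := by
  have hchord : exp x ≤ (1 - x) * exp 0 + x * exp 1 := by
    simpa only [smul_eq_mul, mul_zero, mul_one, zero_add] using
      convexOn_exp.2 (Set.mem_univ 0) (Set.mem_univ 1) (by linarith) h0 (by ring)
  have he : exp 1 ≤ 3 := (exp_one_lt_d9.trans (by norm_num)).le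
  rw [exp_zero] at hchord
  nlinarith

lemma Real.one_sub_exp_neg_one_pos : 0 < 1 - exp (-1) := by
  linarith [exp_neg_one_lt_half]

lemma le_add_sub_mul {R : Type*} [CommRing R] [LinearOrder R] [IsStrictOrderedRing R] {a b : R}
    (ha : a ≤ 1) (hb : 0 ≤ b) : a ≤ a + b - a * b := by
  nlinarith

lemma Real.le_of_mul_exp_le {ε P b : ℝ} (hε : 0 ≤ ε) (hP : 0 ≤ P) (h : P * exp ε ≤ b) :
    P ≤ b :=
  (le_mul_of_one_le_right hP (one_le_exp hε)).trans h

lemma one_sub_div_one_sub_mul_le {K : Type*} [Field K] [LinearOrder K] [IsStrictOrderedRing K]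
    {a P c : K} (ha : 1 ≤ a) (hP : 0 ≤ P) (hc : 0 < c)
    (h : a * P ≤ 1 - c) : (1 - P) / (1 - a * P) ≤ 1 + (a - 1) * P / c := by
  have hden : 0 < 1 - a * P := by linarith
  have hsplit : (1 - P) / (1 - a * P) = 1 + (a - 1) * P / (1 - a * P) := by
    rw [one_add_div hden.ne']
    ring
  rw [hsplit, add_le_add_iff_left]
  exact div_le_div_of_nonneg_left (by nlinarith) hc (by linarith)

lemma survival_ratio_le_exp_s4 {ε P : ℝ} (hε0 : 0 ≤ ε) (hε1 : ε ≤ 1) (hP : 0 ≤ P)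
    (h : P * exp ε ≤ exp (-1)) :
    (1 - P) / (1 - exp ε * P) ≤ exp (2 * ε * P / (1 - exp (-1))) := by
  have hc := one_sub_exp_neg_one_pos
  calc (1 - P) / (1 - exp ε * P)
      ≤ 1 + (exp ε - 1) * P / (1 - exp (-1)) :=
        one_sub_div_one_sub_mul_le (one_le_exp hε0) hP hc (by linarith)
    _ ≤ 1 + 2 * ε * P / (1 - exp (-1)) := by
        gcongr
        linarith [exp_le_one_add_two_mul hε0 hε1]
    _ ≤ exp (2 * ε * P / (1 - exp (-1))) := by
        linarith [add_one_le_exp (2 * ε * P / (1 - exp (-1)))]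

lemma survival_ratio_nonneg {ε P : ℝ} (hε0 : 0 ≤ ε) (hP : 0 ≤ P) (h : P * exp ε ≤ exp (-1)) :
    0 ≤ (1 - P) / (1 - exp ε * P) := by
  have hc := one_sub_exp_neg_one_pos
  have hP1 := le_of_mul_exp_le hε0 hP h
  exact div_nonneg (by linarith) (by linarith)

theorem survival_ratio_prod_le_exp_general (ε' Pu Pv : ℝ) (hε0 : 0 < ε') (hε1 : ε' ≤ 1)
    (hPu0 : 0 ≤ Pu) (hPv0 : 0 ≤ Pv)
    (hu : Pu * Real.exp ε' ≤ Real.exp (-1)) (hv : Pv * Real.exp ε' ≤ Real.exp (-1)) :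
    ((1 - Pu) / (1 - Real.exp ε' * Pu)) * ((1 - Pv) / (1 - Real.exp ε' * Pv))
      ≤ Real.exp (4 * ε' * (Pu + Pv - Pu * Pv) / (1 - Real.exp (-1))) := by
  set p := Pu + Pv - Pu * Pv
  have hc := one_sub_exp_neg_one_pos
  have hPu1 : Pu ≤ 1 := by linarith [le_of_mul_exp_le hε0.le hPu0 hu]
  have hPv1 : Pv ≤ 1 := by linarith [le_of_mul_exp_le hε0.le hPv0 hv]
  have hbound {P : ℝ} (hP : 0 ≤ P) (hPp : P ≤ p) (h : P * exp ε' ≤ exp (-1)) :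
      (1 - P) / (1 - exp ε' * P) ≤ exp (2 * ε' * p / (1 - exp (-1))) :=
    (survival_ratio_le_exp_s4 hε0.le hε1 hP h).trans (by gcongr)
  calc _ ≤ exp (2 * ε' * p / (1 - exp (-1))) * exp (2 * ε' * p / (1 - exp (-1))) :=
        mul_le_mul (hbound hPu0 (le_add_sub_mul hPu1 hPv0) hu)
          (hbound hPv0 (by linarith [le_add_sub_mul hPv1 hPu0]) hv)
          (survival_ratio_nonneg hε0.le hPv0 hv) (exp_nonneg _)
    _ = exp (4 * ε' * p / (1 - exp (-1))) := by
        rw [← exp_add]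
        congr 1
        ring

theorem survival_ratio_prod_le_exp (ε' Pu Pv : ℝ) (hε0 : 0 < ε') (hε1 : ε' ≤ 1)
    (hPu0 : 0 ≤ Pu) (hPu1 : Pu < 1) (hPv0 : 0 ≤ Pv) (hPv1 : Pv < 1)
    (hu : Pu * Real.exp ε' ≤ Real.exp (-1)) (hv : Pv * Real.exp ε' ≤ Real.exp (-1)) :
    ((1 - Pu) / (1 - Real.exp ε' * Pu)) * ((1 - Pv) / (1 - Real.exp ε' * Pv))
      ≤ Real.exp (4 * ε' * (Pu + Pv - Pu * Pv) / (1 - Real.exp (-1))) :=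
  survival_ratio_prod_le_exp_general ε' Pu Pv hε0 hε1 hPu0 hPv0 hu hv
end
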